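/- Extending an occupied segment helps friends and hurts foes: let k ≥ 1 and let L be a nonempty subset of {1,…,k} all of whose elements have the same parity. Write P_m(L ⊆ S) = (1/m!) · #{σ ∈ Sym({1,…,m}) : L ⊆ S(σ)} for the probability, under a uniformly random priority permutation on the path P_m, that every vertex of L lies in the greedy independent set. If k+1 has the same parity as the elements of L (k+1 is a friend of L), then P_k(L ⊆ S) ≤ P_{k+1}(L ⊆ S) and P_k(L ⊆ S) ≤ P_{k+2}(L ⊆ S); if k+1 has the opposite parity (k+1 is a foe of L), then P_k(L ⊆ S) ≥ P_{k+1}(L ⊆ S) and P_k(L ⊆ S) ≥ P_{k+2}(L ⊆ S). -/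
import Mathlib


/-- The greedy independent set on the path `P_m` (vertex `i : Fin m` stands for vertex
`i+1` of `{1,…,m}`, and `i`, `i+1` are adjacent): vertices are processed in increasing
order of their priority rank (`σ i` is the rank of vertex `i`, smaller = higher
priority), and a vertex is inserted iff none of its neighbours is already in the set. -/
def pathGreedy (m : ℕ) (σ : Equiv.Perm (Fin m)) : Finset (Fin m) :=
  (List.finRange m).foldl
    (fun D r =>
      if ∀ j ∈ D, ¬ ((σ.symm r : ℕ) + 1 = (j : ℕ) ∨ (j : ℕ) + 1 = (σ.symm r : ℕ))
      then insert (σ.symm r) D else D)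
    ∅

/-- `P_m(T ⊆ S)`: the probability, under a uniformly random priority permutation on
the path `P_m`, that every vertex of `T` lies in the greedy independent set. -/
noncomputable def pathProb (m : ℕ) (T : Finset (Fin m)) : ℝ :=
  ((Finset.univ.filter
      (fun σ : Equiv.Perm (Fin m) => T ⊆ pathGreedy m σ)).card : ℝ) /
    (Nat.factorial m : ℝ)

def gstep (m : ℕ) (σ : Equiv.Perm (Fin m)) : Finset (Fin m) → Fin m → Finset (Fin m) :=
  fun D r =>
    if ∀ j ∈ D, ¬ ((σ.symm r : ℕ) + 1 = (j : ℕ) ∨ (j : ℕ) + 1 = (σ.symm r : ℕ))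
    then insert (σ.symm r) D else D

lemma pathGreedy_eq (m : ℕ) (σ : Equiv.Perm (Fin m)) :
    pathGreedy m σ = (List.finRange m).foldl (gstep m σ) ∅ := rfl

def chosV {m : ℕ} (σ : Equiv.Perm (Fin m)) (v : Fin m) : Prop :=
  ∀ u : Fin m, ((u:ℕ)+1 = (v:ℕ) ∨ (v:ℕ)+1 = (u:ℕ)) → σ u < σ v → ¬ chosV σ u
termination_by (σ v : ℕ)
decreasing_by exact Fin.lt_iff_val_lt_val.mp (by assumption)

lemma greedy_inv {m : ℕ} (σ : Equiv.Perm (Fin m)) (n : ℕ) (hn : n ≤ m) :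
    ∀ v : Fin m, v ∈ ((List.finRange m).take n).foldl (gstep m σ) ∅
      ↔ ((σ v : ℕ) < n ∧ chosV σ v) := by
  induction n with
  | zero => simp
  | succ n ih =>
    have hn' : n ≤ m := le_of_lt hn
    have ih := ih hn'
    intro v
    have hlen : n < (List.finRange m).length := by simpa using hn
    have hget : (List.finRange m)[n]? = some ⟨n, hn⟩ := by
      rw [List.getElem?_eq_getElem hlen, List.getElem_finRange]
      rfl
    rw [List.take_succ, hget]
    set T : Finset (Fin m) := ((List.finRange m).take n).foldl (gstep m σ) ∅ with hT
    have hfold : (((List.finRange m).take n) ++ [(⟨n, hn⟩ : Fin m)]).foldl (gstep m σ) ∅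
        = gstep m σ T ⟨n, hn⟩ := by
      rw [List.foldl_append]; rfl
    rw [Option.toList_some, hfold]
    set w : Fin m := σ.symm ⟨n, hn⟩ with hw
    have hσw : (σ w : ℕ) = n := by simp [hw]
    by_cases hv : v = w
    · subst hv
      simp only [hσw, Nat.lt_succ_iff, le_refl, true_and]
      by_cases hc : ∀ j ∈ T, ¬ ((w : ℕ) + 1 = (j : ℕ) ∨ (j : ℕ) + 1 = (w : ℕ))
      · rw [gstep]
        simp only [hw] at hc ⊢
        rw [if_pos hc]
        simp only [Finset.mem_insert, true_or, true_iff]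
        rw [chosV]
        intro u hadj hlt hcu
        have hu : u ∈ T := (ih u).2 ⟨by rw [Fin.lt_iff_val_lt_val, hσw] at hlt; exact hlt, hcu⟩
        exact hc u hu (by tauto)
      · rw [gstep]
        simp only [hw] at hc ⊢
        rw [if_neg hc]
        push_neg at hc
        obtain ⟨j, hjT, hadj⟩ := hc
        constructor
        · intro hmem
          exact absurd (((ih w).1 hmem).1.trans_le (le_of_eq hσw.symm)) (lt_irrefl _)
        · intro hch
          obtain ⟨hjn, hcj⟩ := (ih j).1 hjT
          rw [chosV] at hch
          exact absurd hcj (hch j (by tauto) (by rw [Fin.lt_iff_val_lt_val, hσw]; exact hjn))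
    · have hne : σ v ≠ ⟨n, hn⟩ := fun h => hv (by rw [hw, ← h]; simp)
      have hne' : (σ v : ℕ) ≠ n := fun h => hne (Fin.ext h)
      have : v ∈ gstep m σ T ⟨n, hn⟩ ↔ v ∈ T := by
        rw [gstep]
        split
        · rw [Finset.mem_insert]
          simp only [← hw]
          constructor
          · rintro (h | h); · exact absurd h hv
            · exact h
          · exact Or.inr
        · exact Iff.rfl
      rw [this, ih v]
      have h2 : ((σ v : ℕ) < n) ↔ ((σ v : ℕ) < n + 1) := by omega
      rw [h2]

theorem mem_pathGreedy_iff {m : ℕ} (σ : Equiv.Perm (Fin m)) (v : Fin m) :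
    v ∈ pathGreedy m σ ↔ chosV σ v := by
  have h := greedy_inv σ m le_rfl v
  rw [List.take_of_length_le (by simp)] at h
  rw [pathGreedy_eq, h]
  constructor
  · rintro ⟨-, h⟩; exact h
  · intro h; exact ⟨(σ v).2, h⟩

def Asc (p : ℕ → ℕ) (j v : ℕ) : Prop := ∀ t, j ≤ t → t < v → p t < p (t+1)
def Desc (p : ℕ → ℕ) (v j : ℕ) : Prop := ∀ t, v ≤ t → t < j → p (t+1) < p t

instance Asc.dec (p : ℕ → ℕ) (v : ℕ) : DecidablePred (fun j => Asc p j v) := fun _ =>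
  decidable_of_iff (∀ t, t < v → _ ≤ t → p t < p (t+1))
    ⟨fun h t h1 h2 => h t h2 h1, fun h t h1 h2 => h t h2 h1⟩

instance Desc.dec (p : ℕ → ℕ) (v : ℕ) : DecidablePred (fun j => Desc p v j) := fun j =>
  decidable_of_iff (∀ t, t < j → v ≤ t → p (t+1) < p t)
    ⟨fun h t h1 h2 => h t h2 h1, fun h t h1 h2 => h t h2 h1⟩

def la (p : ℕ → ℕ) (v : ℕ) : ℕ :=
  Nat.find (p := fun j => Asc p j v) ⟨v, fun t h1 h2 => absurd h2 (by omega)⟩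

def rb (m : ℕ) (p : ℕ → ℕ) (v : ℕ) : ℕ :=
  Nat.findGreatest (fun j => v ≤ j ∧ Desc p v j) (m-1)

lemma la_le (p : ℕ → ℕ) (v : ℕ) : la p v ≤ v :=
  Nat.find_min' _ (fun t h1 h2 => absurd h2 (by omega))

lemma asc_la (p : ℕ → ℕ) (v : ℕ) : Asc p (la p v) v :=
  Nat.find_spec (p := fun j => Asc p j v) ⟨v, fun t h1 h2 => absurd h2 (by omega)⟩

lemma la_succ_eq (p : ℕ → ℕ) (w : ℕ) (h : ¬ p w < p (w+1)) : la p (w+1) = w+1 := by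
  refine le_antisymm (la_le p (w+1)) ?_
  by_contra hlt
  push_neg at hlt
  exact h (asc_la p (w+1) w (by omega) (by omega))

lemma la_succ_eq' (p : ℕ → ℕ) (w : ℕ) (h : p w < p (w+1)) : la p (w+1) = la p w := by
  refine le_antisymm ?_ ?_
  · refine Nat.find_min' _ (fun t h1 h2 => ?_)
    rcases Nat.lt_succ_iff_lt_or_eq.mp h2 with h2 | h2
    · exact asc_la p w t h1 h2
    · subst h2; exact h
  · exact Nat.find_min' _ (fun t h1 h2 => asc_la p (w+1) t h1 (by omega))

lemma rb_le (m : ℕ) (p : ℕ → ℕ) (v : ℕ) : rb m p v ≤ m - 1 := Nat.findGreatest_le _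

lemma rb_ge (m : ℕ) (p : ℕ → ℕ) (v : ℕ) (hv : v ≤ m - 1) : v ≤ rb m p v :=
  Nat.le_findGreatest hv ⟨le_rfl, fun t h1 h2 => absurd h2 (by omega)⟩

lemma rb_spec (m : ℕ) (p : ℕ → ℕ) (v : ℕ) (hv : v ≤ m - 1) :
    v ≤ rb m p v ∧ Desc p v (rb m p v) :=
  Nat.findGreatest_spec (P := fun j => v ≤ j ∧ Desc p v j) hv
    ⟨le_rfl, fun t h1 h2 => absurd h2 (by omega)⟩

lemma rb_eq_self (m : ℕ) (p : ℕ → ℕ) (v : ℕ) (hv : v ≤ m - 1) (h : ¬ p (v+1) < p v) :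
    rb m p v = v := by
  rw [rb, Nat.findGreatest_eq_iff]
  refine ⟨hv, fun _ => ⟨le_rfl, fun t h1 h2 => absurd h2 (by omega)⟩, fun j hj hj' hP => ?_⟩
  exact h (hP.2 v le_rfl hj)

lemma rb_succ (m : ℕ) (p : ℕ → ℕ) (v : ℕ) (hv : v + 1 ≤ m - 1) (h : p (v+1) < p v) :
    rb m p v = rb m p (v+1) := by
  have h1 : v + 1 ≤ rb m p v := by
    refine Nat.le_findGreatest hv ⟨by omega, fun t ht1 ht2 => ?_⟩
    have : t = v := by omega
    subst this; exact h
  have h2 : v + 1 ≤ rb m p (v+1) := rb_ge m p (v+1) hv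
  have s1 := rb_spec m p v (by omega)
  have s2 := rb_spec m p (v+1) hv
  refine le_antisymm ?_ ?_
  · by_contra hc
    push_neg at hc
    refine Nat.findGreatest_is_greatest hc (rb_le m p v) ⟨by omega, fun t ht1 ht2 => ?_⟩
    exact s1.2 t (by omega) ht2
  · by_contra hc
    push_neg at hc
    refine Nat.findGreatest_is_greatest hc (rb_le m p (v+1)) ⟨by omega, fun t ht1 ht2 => ?_⟩
    rcases Nat.lt_or_ge v t with ht | ht
    · exact s2.2 t (by omega) ht2
    · have : t = v := by omega
      subst this; exact h

def QQ (m : ℕ) (p : ℕ → ℕ) (v : ℕ) : Prop :=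
  Even (v - la p v) ∧ Even (rb m p v - v)

lemma left_iff (m : ℕ) (p : ℕ → ℕ) (v : ℕ) (hv : v < m) :
    (∀ w : ℕ, w + 1 = v → p w < p v → ¬ QQ m p w) ↔ Even (v - la p v) := by
  rcases Nat.eq_zero_or_eq_succ_pred v with h0 | hsucc
  · subst h0
    have h0 : la p 0 = 0 := Nat.le_zero.mp (la_le p 0)
    simp [h0]
  · set w := v - 1 with hwdef
    have hw : v = w + 1 := hsucc
    by_cases hlt : p w < p v
    · have hiff : (∀ w' : ℕ, w' + 1 = v → p w' < p v → ¬ QQ m p w') ↔ ¬ QQ m p w := by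
        constructor
        · intro h; exact h w (by omega) hlt
        · intro h w' hw' hlt'
          have : w' = w := by omega
          subst this; exact h
      rw [hiff]
      have hrb : rb m p w = w := rb_eq_self m p w (by omega) (by rw [← hw]; omega)
      have hla : la p v = la p w := by rw [hw]; exact la_succ_eq' p w (by rw [← hw]; exact hlt)
      have hle : la p w ≤ w := la_le p w
      rw [QQ, hrb, hla]
      simp only [Nat.sub_self, Even.zero, and_true]
      rw [Nat.even_iff, Nat.even_iff, Nat.not_lt.symm] at *
      constructor
      · intro h
        have : ¬ (w - la p w) % 2 = 0 := h
        omega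
      · intro h hq
        omega
    · have hla : la p v = v := by rw [hw]; exact la_succ_eq p w (by rw [← hw]; exact hlt)
      rw [hla]
      simp only [Nat.sub_self, Even.zero, iff_true]
      intro w' hw' hlt'
      have : w' = w := by omega
      subst this
      exact absurd hlt' hlt

lemma right_iff (m : ℕ) (p : ℕ → ℕ) (v : ℕ) (hv : v < m) :
    (∀ w : ℕ, w = v + 1 → w < m → p w < p v → ¬ QQ m p w) ↔ Even (rb m p v - v) := by
  by_cases hvm : v + 1 < m
  · by_cases hlt : p (v+1) < p v
    · have hiff : (∀ w : ℕ, w = v + 1 → w < m → p w < p v → ¬ QQ m p w) ↔ ¬ QQ m p (v+1) := by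
        constructor
        · intro h; exact h (v+1) rfl hvm hlt
        · intro h w' hw' _ _; subst hw'; exact h
      rw [hiff]
      have hla : la p (v+1) = v + 1 := la_succ_eq p v (by omega)
      have hrb : rb m p v = rb m p (v+1) := rb_succ m p v (by omega) hlt
      have hge : v + 1 ≤ rb m p (v+1) := rb_ge m p (v+1) (by omega)
      rw [QQ, hla, hrb]
      simp only [Nat.sub_self, Even.zero, true_and]
      rw [Nat.even_iff, Nat.even_iff]
      constructor
      · intro h; omega
      · intro h hq; omega
    · have hrb : rb m p v = v := rb_eq_self m p v (by omega) hlt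
      rw [hrb]
      simp only [Nat.sub_self, Even.zero, iff_true]
      intro w' hw' _ hlt'
      subst hw'
      exact absurd hlt' hlt
  · have hrb : rb m p v = v := by
      have h1 := rb_le m p v
      have h2 := rb_ge m p v (by omega)
      omega
    rw [hrb]
    simp only [Nat.sub_self, Even.zero, iff_true]
    intro w' hw' hwm
    omega

section transfer

variable {m m' : ℕ} (hm : m ≤ m') (p p' : ℕ → ℕ)
variable (hord : ∀ s t, s < m → t < m → (p s < p t ↔ p' s < p' t))

include hord in
lemma la_transfer (v : ℕ) (hv : v < m) : la p' v = la p v := by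
  refine le_antisymm ?_ ?_
  · exact Nat.find_min' _ (fun t h1 h2 =>
      (hord t (t+1) (by omega) (by omega)).mp (asc_la p v t h1 h2))
  · exact Nat.find_min' _ (fun t h1 h2 =>
      (hord t (t+1) (by omega) (by omega)).mpr (asc_la p' v t h1 h2))

include hm hord in
lemma rb_transfer (v : ℕ) (hv : v < m) (hm1 : 1 ≤ m) :
    rb m p v = min (rb m' p' v) (m-1) := by
  have hv1 : v ≤ m - 1 := by omega
  have hv1' : v ≤ m' - 1 := by omega
  have s' := rb_spec m' p' v hv1'
  rcases le_or_gt (rb m' p' v) (m-1) with hle | hlt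
  · rw [min_eq_left hle]
    refine le_antisymm ?_ ?_
    · by_contra hc
      push_neg at hc
      have hb := rb_le m p v
      refine Nat.findGreatest_is_greatest hc (by omega) ⟨?_, fun t ht1 ht2 => ?_⟩
      · exact (rb_spec m p v hv1).1
      · have hb := (rb_spec m p v hv1).2 t ht1 ht2
        have htm : t + 1 ≤ m - 1 := le_trans ht2 (rb_le m p v)
        exact (hord (t+1) t (by omega) (by omega)).mp hb
    · refine Nat.le_findGreatest hle ⟨s'.1, fun t ht1 ht2 => ?_⟩
      have htm : t + 1 ≤ m - 1 := le_trans ht2 hle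
      exact (hord (t+1) t (by omega) (by omega)).mpr (s'.2 t ht1 ht2)
  · rw [min_eq_right (by omega)]
    refine le_antisymm (rb_le m p v) ?_
    refine Nat.le_findGreatest le_rfl ⟨hv1, fun t ht1 ht2 => ?_⟩
    exact (hord (t+1) t (by omega) (by omega)).mpr (s'.2 t ht1 (by omega))

end transfer


def pv {m : ℕ} (σ : Equiv.Perm (Fin m)) (t : ℕ) : ℕ :=
  if h : t < m then (σ ⟨t, h⟩ : ℕ) else m + t

lemma pv_lt_iff {m : ℕ} (σ : Equiv.Perm (Fin m)) (u v : Fin m) :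
    pv σ (u : ℕ) < pv σ (v : ℕ) ↔ σ u < σ v := by
  simp only [pv, dif_pos u.2, dif_pos v.2, Fin.eta]
  exact (Fin.lt_iff_val_lt_val).symm

theorem chosV_iff_QQ {m : ℕ} (σ : Equiv.Perm (Fin m)) :
    ∀ (n : ℕ) (v : Fin m), (σ v : ℕ) = n → (chosV σ v ↔ QQ m (pv σ) (v : ℕ)) := by
  intro n
  induction n using Nat.strong_induction_on with
  | _ n IH =>
    intro v hv
    have IH' : ∀ u : Fin m, σ u < σ v → (chosV σ u ↔ QQ m (pv σ) (u : ℕ)) := fun u hu =>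
      IH (σ u) (by rw [← hv]; exact Fin.lt_iff_val_lt_val.mp hu) u rfl
    rw [chosV]
    constructor
    · intro h
      refine ⟨(left_iff m (pv σ) v v.2).mp ?_, (right_iff m (pv σ) v v.2).mp ?_⟩
      · intro w hw hpw hq
        have hwm : w < m := by have := v.2; omega
        have hσ : σ ⟨w, hwm⟩ < σ v := (pv_lt_iff σ ⟨w, hwm⟩ v).mp hpw
        exact h ⟨w, hwm⟩ (Or.inl hw) hσ ((IH' ⟨w, hwm⟩ hσ).mpr hq)
      · intro w hw hwm hpw hq
        have hσ : σ ⟨w, hwm⟩ < σ v := (pv_lt_iff σ ⟨w, hwm⟩ v).mp hpw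
        exact h ⟨w, hwm⟩ (Or.inr (show (v:ℕ) + 1 = w by omega)) hσ ((IH' ⟨w, hwm⟩ hσ).mpr hq)
    · rintro hQQ u hadj hσ hc
      have hq := (IH' u hσ).mp hc
      have hp : pv σ (u : ℕ) < pv σ (v : ℕ) := (pv_lt_iff σ u v).mpr hσ
      rcases hadj with h1 | h1
      · exact (left_iff m (pv σ) v v.2).mpr hQQ.1 u h1 hp hq
      · exact (right_iff m (pv σ) v v.2).mpr hQQ.2 u h1.symm u.2 hp hq

theorem mem_pathGreedy_iff_QQ {m : ℕ} (σ : Equiv.Perm (Fin m)) (v : Fin m) :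
    v ∈ pathGreedy m σ ↔ QQ m (pv σ) (v : ℕ) :=
  (mem_pathGreedy_iff σ v).trans (chosV_iff_QQ σ (σ v) v rfl)

/-! extension permutations -/

noncomputable def extPerm {m : ℕ} (t : Fin (m+1)) (τ : Equiv.Perm (Fin m)) : Equiv.Perm (Fin (m+1)) :=
  Equiv.ofBijective (fun v => if h : (v : ℕ) < m then t.succAbove (τ ⟨v, h⟩) else t)
    (Finite.injective_iff_bijective.mp (by
      intro a b hab
      dsimp only at hab
      by_cases ha : (a : ℕ) < m <;> by_cases hb : (b : ℕ) < m
      · rw [dif_pos ha, dif_pos hb] at hab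
        have h2 := τ.injective (Fin.succAbove_right_injective (p := t) hab)
        have h3 := congrArg Fin.val h2
        exact Fin.ext h3
      · rw [dif_pos ha, dif_neg hb] at hab
        exact absurd hab (Fin.succAbove_ne t _)
      · rw [dif_neg ha, dif_pos hb] at hab
        exact absurd hab.symm (Fin.succAbove_ne t _)
      · have := a.2; have := b.2
        exact Fin.ext (by omega)))

lemma extPerm_apply_lt {m : ℕ} (t : Fin (m+1)) (τ : Equiv.Perm (Fin m)) (v : Fin (m+1))
    (h : (v : ℕ) < m) : extPerm t τ v = t.succAbove (τ ⟨v, h⟩) := dif_pos h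

lemma extPerm_apply_last {m : ℕ} (t : Fin (m+1)) (τ : Equiv.Perm (Fin m)) :
    extPerm t τ ⟨m, by omega⟩ = t := dif_neg (lt_irrefl m)

lemma extPerm_lt_iff {m : ℕ} (t : Fin (m+1)) (τ : Equiv.Perm (Fin m)) (a b : Fin (m+1))
    (ha : (a : ℕ) < m) (hb : (b : ℕ) < m) :
    (extPerm t τ a < extPerm t τ b ↔ τ ⟨a, ha⟩ < τ ⟨b, hb⟩) := by
  rw [extPerm_apply_lt t τ a ha, extPerm_apply_lt t τ b hb, Fin.succAbove_lt_succAbove_iff]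

noncomputable def bigE (m : ℕ) : (Fin (m+1) × Equiv.Perm (Fin m)) ≃ Equiv.Perm (Fin (m+1)) :=
  Equiv.ofBijective (fun x => extPerm x.1 x.2) (by
    rw [Fintype.bijective_iff_injective_and_card]
    constructor
    · rintro ⟨t, τ⟩ ⟨t', τ'⟩ h
      dsimp only at h
      have hlast : t = t' := by
        have h2 := congrArg (fun σ : Equiv.Perm (Fin (m+1)) => σ ⟨m, by omega⟩) h
        simpa only [extPerm_apply_last] using h2
      subst hlast
      have hτ : τ = τ' := by
        ext i
        have hlt : ((Fin.castSucc i : Fin (m+1)) : ℕ) < m := i.2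
        have h2 := congrArg (fun σ : Equiv.Perm (Fin (m+1)) => σ (Fin.castSucc i)) h
        rw [extPerm_apply_lt t τ _ hlt, extPerm_apply_lt t τ' _ hlt] at h2
        have h3 := Fin.succAbove_right_injective (p := t) h2
        exact congrArg Fin.val h3
      rw [hτ]
    · simp [Fintype.card_perm, Nat.factorial_succ])

lemma bigE_apply {m : ℕ} (x : Fin (m+1) × Equiv.Perm (Fin m)) :
    bigE m x = extPerm x.1 x.2 := rfl

/-! pointwise lemmas -/

lemma hord_pv {k m' : ℕ} (hm : k ≤ m') (τ : Equiv.Perm (Fin k)) (σ' : Equiv.Perm (Fin m'))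
    (hord : ∀ u v : Fin k, σ' (Fin.castLE hm u) < σ' (Fin.castLE hm v) ↔ τ u < τ v) :
    ∀ s t, s < k → t < k → (pv τ s < pv τ t ↔ pv σ' s < pv σ' t) := by
  intro s t hs ht
  simp only [pv, dif_pos hs, dif_pos ht, dif_pos (hs.trans_le hm), dif_pos (ht.trans_le hm)]
  rw [← Fin.lt_iff_val_lt_val, ← Fin.lt_iff_val_lt_val]
  exact Iff.symm (hord ⟨s, hs⟩ ⟨t, ht⟩)

lemma pointwise_friend {k m' : ℕ} (hm : k ≤ m') (τ : Equiv.Perm (Fin k))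
    (σ' : Equiv.Perm (Fin m'))
    (hord : ∀ u v : Fin k, σ' (Fin.castLE hm u) < σ' (Fin.castLE hm v) ↔ τ u < τ v)
    (v : Fin k) (hpar : (v : ℕ) % 2 = k % 2) (hv : v ∈ pathGreedy k τ) :
    Fin.castLE hm v ∈ pathGreedy m' σ' := by
  have hk1 : 1 ≤ k := by have := v.2; omega
  have hordp := hord_pv hm τ σ' hord
  rw [mem_pathGreedy_iff_QQ] at hv ⊢
  obtain ⟨h1, h2⟩ := hv
  have hla := la_transfer (pv τ) (pv σ') hordp (v : ℕ) v.2
  have hrb := rb_transfer hm (pv τ) (pv σ') hordp (v : ℕ) v.2 hk1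
  have hcoe : ((Fin.castLE hm v : Fin m') : ℕ) = (v : ℕ) := rfl
  constructor
  · rw [hcoe, hla]; exact h1
  · rw [hcoe]
    have hge := rb_ge k (pv τ) (v : ℕ) (by have := v.2; omega)
    have hge' := rb_ge m' (pv σ') (v : ℕ) (by have := v.2; omega)
    rw [Nat.even_iff] at h2 ⊢
    have hvk := v.2
    omega

lemma pointwise_foe {k m' : ℕ} (hm : k ≤ m') (hm2 : m' ≤ k + 2) (τ : Equiv.Perm (Fin k))
    (σ' : Equiv.Perm (Fin m'))
    (hord : ∀ u v : Fin k, σ' (Fin.castLE hm u) < σ' (Fin.castLE hm v) ↔ τ u < τ v)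
    (v : Fin k) (hpar : (v : ℕ) % 2 ≠ k % 2) (hv : Fin.castLE hm v ∈ pathGreedy m' σ') :
    v ∈ pathGreedy k τ := by
  have hk1 : 1 ≤ k := by have := v.2; omega
  have hordp := hord_pv hm τ σ' hord
  rw [mem_pathGreedy_iff_QQ] at hv ⊢
  obtain ⟨h1, h2⟩ := hv
  have hla := la_transfer (pv τ) (pv σ') hordp (v : ℕ) v.2
  have hrb := rb_transfer hm (pv τ) (pv σ') hordp (v : ℕ) v.2 hk1
  have hcoe : ((Fin.castLE hm v : Fin m') : ℕ) = (v : ℕ) := rfl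
  rw [hcoe] at h1 h2
  constructor
  · rw [← hla]; exact h1
  · have hge := rb_ge k (pv τ) (v : ℕ) (by have := v.2; omega)
    have hge' := rb_ge m' (pv σ') (v : ℕ) (by have := v.2; omega)
    have hble := rb_le m' (pv σ') (v : ℕ)
    rw [Nat.even_iff] at h2 ⊢
    have hvk := v.2
    omega

/-! counting -/

lemma card_filter_equiv {α β : Type*} [Fintype α] [Fintype β] [DecidableEq β] (e : α ≃ β)
    (P : β → Prop) [DecidablePred P] :
    (Finset.univ.filter (fun a => P (e a))).card = (Finset.univ.filter P).card := by
  refine Finset.card_bij (fun a _ => e a) ?_ ?_ ?_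
  · intro a ha
    simp only [Finset.mem_filter, Finset.mem_univ, true_and] at ha ⊢
    exact ha
  · intro a _ b _ h
    exact e.injective h
  · intro b hb
    simp only [Finset.mem_filter, Finset.mem_univ, true_and] at hb
    exact ⟨e.symm b, by simp [hb], by simp⟩

lemma card_filter_snd {γ δ : Type*} [Fintype γ] [Fintype δ] [DecidableEq γ] [DecidableEq δ]
    (Q : δ → Prop) [DecidablePred Q] :
    (Finset.univ.filter (fun x : γ × δ => Q x.2)).card
      = Fintype.card γ * (Finset.univ.filter Q).card := by
  have h : (Finset.univ.filter (fun x : γ × δ => Q x.2))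
      = Finset.univ ×ˢ (Finset.univ.filter Q) := by
    ext x
    simp [Finset.mem_product]
  rw [h, Finset.card_product, Finset.card_univ]


lemma div_step_le (c A B f : ℕ) (hc : 0 < c) (hf : 0 < f) (h : c * A ≤ B) :
    (A : ℝ) / (f : ℝ) ≤ (B : ℝ) / ((c * f : ℕ) : ℝ) := by
  rw [div_le_div_iff₀ (by positivity) (by positivity)]
  have h' : ((c : ℝ)) * A ≤ B := by exact_mod_cast h
  have hf' : (0:ℝ) ≤ f := by positivity
  push_cast
  nlinarith

lemma div_step_ge (c A B f : ℕ) (hc : 0 < c) (hf : 0 < f) (h : B ≤ c * A) :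
    (B : ℝ) / ((c * f : ℕ) : ℝ) ≤ (A : ℝ) / (f : ℝ) := by
  rw [div_le_div_iff₀ (by positivity) (by positivity)]
  have h' : (B : ℝ) ≤ (c : ℝ) * A := by exact_mod_cast h
  have hf' : (0:ℝ) ≤ f := by positivity
  push_cast
  nlinarith

/-- Extending an occupied segment helps friends and hurts foes. Let `L` be a nonempty
set of vertices of the path `P_k`, all of the same parity (mutual friends; here
`i : Fin k` stands for vertex `i+1` of `{1,…,k}`). If the new vertex `k+1` (the vertex
with index `k` in `Fin (k+1)`) is a friend of the vertices of `L`, then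
`P_k(L ⊆ S) ≤ P_{k+1}(L ⊆ S)` and `P_k(L ⊆ S) ≤ P_{k+2}(L ⊆ S)`; if it is a foe,
both inequalities are reversed. -/
theorem friend_foe_monotonicity (k : ℕ) (hk : 1 ≤ k) (L : Finset (Fin k))
    (hL : L.Nonempty) (hpar : ∀ i ∈ L, ∀ j ∈ L, (i : ℕ) % 2 = (j : ℕ) % 2) :
    ((∀ i ∈ L, (i : ℕ) % 2 = k % 2) →
        pathProb k L ≤
            pathProb (k + 1) (L.map (Fin.castLEEmb (by omega : k ≤ k + 1))) ∧
        pathProb k L ≤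
            pathProb (k + 2) (L.map (Fin.castLEEmb (by omega : k ≤ k + 2)))) ∧
    ((∀ i ∈ L, (i : ℕ) % 2 ≠ k % 2) →
        pathProb (k + 1) (L.map (Fin.castLEEmb (by omega : k ≤ k + 1))) ≤
            pathProb k L ∧
        pathProb (k + 2) (L.map (Fin.castLEEmb (by omega : k ≤ k + 2))) ≤
            pathProb k L) := by
  have h1 : k ≤ k + 1 := by omega
  have h2 : k ≤ k + 2 := by omega
  have hmap : ∀ (m' : ℕ) (hm : k ≤ m') (S : Finset (Fin m')),
      (L.map (Fin.castLEEmb hm) ⊆ S ↔ ∀ v ∈ L, Fin.castLE hm v ∈ S) := by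
    intro m' hm S
    constructor
    · intro h v hv
      exact h (Finset.mem_map_of_mem _ hv)
    · intro h x hx
      obtain ⟨v, hv, rfl⟩ := Finset.mem_map.mp hx
      exact h v hv
  -- the two decompositions
  set G : (Fin (k+2) × (Fin (k+1) × Equiv.Perm (Fin k))) ≃ Equiv.Perm (Fin (k+2)) :=
    (Equiv.prodCongr (Equiv.refl (Fin (k+2))) (bigE k)).trans (bigE (k+1)) with hG
  have hord1 : ∀ (x : Fin (k+1) × Equiv.Perm (Fin k)) (u v : Fin k),
      (bigE k x) (Fin.castLE h1 u) < (bigE k x) (Fin.castLE h1 v) ↔ x.2 u < x.2 v := by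
    intro x u v
    exact extPerm_lt_iff x.1 x.2 _ _ u.2 v.2
  have hord2 : ∀ (x : Fin (k+2) × (Fin (k+1) × Equiv.Perm (Fin k))) (u v : Fin k),
      (G x) (Fin.castLE h2 u) < (G x) (Fin.castLE h2 v) ↔ x.2.2 u < x.2.2 v := by
    intro x u v
    have e1 := extPerm_lt_iff x.1 (extPerm x.2.1 x.2.2) (Fin.castLE h2 u) (Fin.castLE h2 v)
      (Nat.lt_succ_of_lt u.2) (Nat.lt_succ_of_lt v.2)
    have e2 := extPerm_lt_iff x.2.1 x.2.2 ⟨(u : ℕ), Nat.lt_succ_of_lt u.2⟩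
      ⟨(v : ℕ), Nat.lt_succ_of_lt v.2⟩ u.2 v.2
    exact e1.trans e2
  -- counting abbreviations
  set A : ℕ := (Finset.univ.filter
    (fun τ : Equiv.Perm (Fin k) => L ⊆ pathGreedy k τ)).card with hA
  set B1 : ℕ := (Finset.univ.filter
    (fun σ : Equiv.Perm (Fin (k+1)) =>
      L.map (Fin.castLEEmb h1) ⊆ pathGreedy (k+1) σ)).card with hB1
  set B2 : ℕ := (Finset.univ.filter
    (fun σ : Equiv.Perm (Fin (k+2)) =>
      L.map (Fin.castLEEmb h2) ⊆ pathGreedy (k+2) σ)).card with hB2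
  have hE1 : B1 = (Finset.univ.filter
      (fun x : Fin (k+1) × Equiv.Perm (Fin k) =>
        L.map (Fin.castLEEmb h1) ⊆ pathGreedy (k+1) (bigE k x))).card := by
    rw [hB1, ← card_filter_equiv (bigE k)
      (fun σ => L.map (Fin.castLEEmb h1) ⊆ pathGreedy (k+1) σ)]
  have hE2 : B2 = (Finset.univ.filter
      (fun x : Fin (k+2) × (Fin (k+1) × Equiv.Perm (Fin k)) =>
        L.map (Fin.castLEEmb h2) ⊆ pathGreedy (k+2) (G x))).card := by
    rw [hB2, ← card_filter_equiv G
      (fun σ => L.map (Fin.castLEEmb h2) ⊆ pathGreedy (k+2) σ)]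
  have hcard1 : (Finset.univ.filter
      (fun x : Fin (k+1) × Equiv.Perm (Fin k) => L ⊆ pathGreedy k x.2)).card
      = (k+1) * A := by
    rw [card_filter_snd (fun τ : Equiv.Perm (Fin k) => L ⊆ pathGreedy k τ), Fintype.card_fin]
  have hcard2 : (Finset.univ.filter
      (fun x : Fin (k+2) × (Fin (k+1) × Equiv.Perm (Fin k)) =>
        L ⊆ pathGreedy k x.2.2)).card = (k+2) * ((k+1) * A) := by
    rw [card_filter_snd (fun y : Fin (k+1) × Equiv.Perm (Fin k) => L ⊆ pathGreedy k y.2),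
      Fintype.card_fin, hcard1]
  have hfac1 : (k+1).factorial = (k+1) * k.factorial := Nat.factorial_succ k
  have hfac2 : (k+2).factorial = ((k+2)*(k+1)) * k.factorial := by
    rw [Nat.factorial_succ, Nat.factorial_succ]; ring
  have hprob : pathProb k L = (A : ℝ) / (k.factorial : ℝ) := rfl
  have hprob1 : pathProb (k+1) (L.map (Fin.castLEEmb h1))
      = (B1 : ℝ) / (((k+1) * k.factorial : ℕ) : ℝ) := by
    rw [pathProb, ← hfac1, hB1]
  have hprob2 : pathProb (k+2) (L.map (Fin.castLEEmb h2))
      = (B2 : ℝ) / ((((k+2)*(k+1)) * k.factorial : ℕ) : ℝ) := by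
    rw [pathProb, ← hfac2, hB2]
  constructor
  · intro hfr
    have key1 : (k+1) * A ≤ B1 := by
      rw [hE1, ← hcard1]
      apply Finset.card_le_card
      intro x hx
      simp only [Finset.mem_filter, Finset.mem_univ, true_and] at hx ⊢
      rw [hmap (k+1) h1]
      intro v hv
      exact pointwise_friend h1 x.2 (bigE k x) (hord1 x) v (hfr v hv) (hx hv)
    have key2 : ((k+2)*(k+1)) * A ≤ B2 := by
      rw [hE2]
      calc ((k+2)*(k+1)) * A = (k+2) * ((k+1) * A) := by ring
        _ = _ := hcard2.symm
        _ ≤ _ := by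
          apply Finset.card_le_card
          intro x hx
          simp only [Finset.mem_filter, Finset.mem_univ, true_and] at hx ⊢
          rw [hmap (k+2) h2]
          intro v hv
          exact pointwise_friend h2 x.2.2 (G x) (hord2 x) v (hfr v hv) (hx hv)
    refine ⟨?_, ?_⟩
    · rw [hprob, hprob1]
      exact div_step_le (k+1) A B1 k.factorial (by omega) (Nat.factorial_pos k) key1
    · rw [hprob, hprob2]
      exact div_step_le ((k+2)*(k+1)) A B2 k.factorial (by positivity) (Nat.factorial_pos k) key2
  · intro hfo
    have key1 : B1 ≤ (k+1) * A := by
      rw [hE1, ← hcard1]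
      apply Finset.card_le_card
      intro x hx
      simp only [Finset.mem_filter, Finset.mem_univ, true_and] at hx ⊢
      rw [hmap (k+1) h1] at hx
      intro v hv
      exact pointwise_foe h1 (by omega) x.2 (bigE k x) (hord1 x) v (hfo v hv) (hx v hv)
    have key2 : B2 ≤ ((k+2)*(k+1)) * A := by
      rw [hE2]
      calc (Finset.univ.filter
          (fun x : Fin (k+2) × (Fin (k+1) × Equiv.Perm (Fin k)) =>
            L.map (Fin.castLEEmb h2) ⊆ pathGreedy (k+2) (G x))).card
          ≤ (Finset.univ.filter
          (fun x : Fin (k+2) × (Fin (k+1) × Equiv.Perm (Fin k)) =>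
            L ⊆ pathGreedy k x.2.2)).card := by
            apply Finset.card_le_card
            intro x hx
            simp only [Finset.mem_filter, Finset.mem_univ, true_and] at hx ⊢
            rw [hmap (k+2) h2] at hx
            intro v hv
            exact pointwise_foe h2 (by omega) x.2.2 (G x) (hord2 x) v (hfo v hv) (hx v hv)
        _ = (k+2) * ((k+1) * A) := hcard2
        _ = ((k+2)*(k+1)) * A := by ring
    refine ⟨?_, ?_⟩
    · rw [hprob, hprob1]
      exact div_step_ge (k+1) A B1 k.factorial (by omega) (Nat.factorial_pos k) key1
    · rw [hprob, hprob2]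
      exact div_step_ge ((k+2)*(k+1)) A B2 k.factorial (by positivity) (Nat.factorial_pos k) key2
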